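/- Let X and Y be d-dimensional simplicial complexes such that Y is obtained from X by a single bistellar move of index l (0 ≤ l ≤ d). Then for 0 ≤ j ≤ d, g_{j+1}(Y) − g_{j+1}(X) equals +1 if j = l ≠ d/2, equals −1 if j = d−l ≠ d/2, and equals 0 otherwise. -/

import Mathlib

open Finset

/-- An abstract simplicial complex on vertex set `V`, given as a finite, downward closed
family of finite sets containing the empty face. -/
def IsComplex {V : Type*} (X : Finset (Finset V)) : Prop :=
  ∅ ∈ X ∧ ∀ s ∈ X, ∀ t ⊆ s, t ∈ X

/-- `fc X j` is the number of faces of `X` of cardinality `j`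
(so `fc X (i+1)` is the number of `i`-dimensional faces, and `fc X 0 = 1`). -/
def fc {V : Type*} (X : Finset (Finset V)) (j : ℕ) : ℕ :=
  (X.filter fun s => s.card = j).card

/-- The full simplex on the vertex set `σ`. -/
def simplexC {V : Type*} [DecidableEq V] (σ : Finset V) : Finset (Finset V) :=
  σ.powerset

/-- The boundary complex of the simplex on `σ` (all proper subsets of `σ`). -/
def boundaryC {V : Type*} [DecidableEq V] (σ : Finset V) : Finset (Finset V) :=
  σ.powerset.erase σ

/-- The join of two families of faces (on disjoint vertex sets). -/
def joinC {V : Type*} [DecidableEq V] (A B : Finset (Finset V)) : Finset (Finset V) :=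
  (A ×ˢ B).image fun p => p.1 ∪ p.2

/-- The induced subcomplex of `X` on the vertex set `W`. -/
def inducedC {V : Type*} [DecidableEq V] (X : Finset (Finset V)) (W : Finset V) :
    Finset (Finset V) :=
  X.filter fun s => s ⊆ W

/-- The vertex set of a complex. -/
def vertexSet {V : Type*} [DecidableEq V] (X : Finset (Finset V)) : Finset V :=
  X.sup id

/-- The link of a vertex `x` in `X`. -/
def linkC {V : Type*} [DecidableEq V] (X : Finset (Finset V)) (x : V) :
    Finset (Finset V) :=
  X.filter fun s => x ∉ s ∧ insert x s ∈ X

/-- `X` is pure of dimension `d`: every face has dimension at most `d` and is contained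
in a face of dimension exactly `d`. -/
def PureDim {V : Type*} (X : Finset (Finset V)) (d : ℕ) : Prop :=
  (∀ s ∈ X, s.card ≤ d + 1) ∧ ∀ s ∈ X, ∃ F ∈ X, s ⊆ F ∧ F.card = d + 1

/-- `Y` is obtained from `X` by the bistellar move `α ↦ β`: the induced subcomplex of `X`
on `α ⊔ β` is `α̅ * ∂β`, and `Y` is obtained by replacing it with `∂α * β̅`. -/
def BistellarMove {V : Type*} [DecidableEq V] (X Y : Finset (Finset V))
    (α β : Finset V) : Prop :=
  α.Nonempty ∧ β.Nonempty ∧ Disjoint α β ∧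
  inducedC X (α ∪ β) = joinC (simplexC α) (boundaryC β) ∧
  Y = (X \ joinC (simplexC α) (boundaryC β)) ∪ joinC (boundaryC α) (simplexC β)

/-- The `g`-vector of a `d`-dimensional complex:
`g_j(X) = ∑_{i=−1}^{j−1} (−1)^{j−i−1} C(d−i+1, j−i−1) f_i(X)` (here `k = i + 1`). -/
def gvec {V : Type*} (d : ℕ) (X : Finset (Finset V)) (j : ℕ) : ℤ :=
  ∑ k ∈ Finset.range (j + 1),
    (-1 : ℤ) ^ (j - k) * ((d + 2 - k).choose (j - k)) * (fc X k : ℤ)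

/-!
A bistellar move only touches faces inside `α ∪ β`: it removes the faces containing `β` and adds
those containing `α`, so with `a = |α|`, `b = |β|` the face numbers change by
`f_k(Y) - f_k(X) = C(a, k - b) - C(b, k - a)`. Since `a + b = d + 2`, the `g`-transform of
`k ↦ C(a, k - b)` is the indicator of `b`, by the binomial inversion
`∑ₘ (-1)^(r-m) C(n-m, r-m) C(n, m) = δ_{r,0}`. Hence `g_{j+1}` changes by
`[j + 1 = l + 1] - [j + 1 = d + 1 - l]`, the two terms cancelling when `l = d - l`.
-/

theorem sum_range_neg_one_pow_mul_choose_sub_mul_choose (n r : ℕ) :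
    ∑ m ∈ range (r + 1), (-1 : ℤ) ^ (r - m) * ((n - m).choose (r - m) : ℤ) * (n.choose m : ℤ)
      = if r = 0 then 1 else 0 := by
  have hterm : ∀ m ∈ range (r + 1),
      (-1 : ℤ) ^ (r - m) * ((n - m).choose (r - m) : ℤ) * (n.choose m : ℤ)
        = (n.choose r * (-1) ^ r : ℤ) * ((-1) ^ m * r.choose m) := by
    intro m hm
    have hmr : m ≤ r := Nat.lt_succ_iff.mp (mem_range.mp hm)
    have hchoose : (n.choose m * (n - m).choose (r - m) : ℤ) = n.choose r * r.choose m := by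
      exact_mod_cast (Nat.choose_mul hmr).symm
    have hsign : (-1 : ℤ) ^ (r - m) = (-1) ^ r * (-1) ^ m := by
      obtain ⟨s, rfl⟩ := Nat.exists_eq_add_of_le hmr
      rw [Nat.add_sub_cancel_left, pow_add, mul_right_comm, ← pow_add, Even.neg_one_pow ⟨m, rfl⟩,
        one_mul]
    rw [hsign]
    linear_combination ((-1 : ℤ) ^ r * (-1) ^ m) * hchoose
  rw [sum_congr rfl hterm, ← mul_sum, Int.alternating_sum_range_choose]
  split_ifs with hr <;> simp [hr]

theorem sum_range_neg_one_pow_mul_choose_mul_shifted_choose {a b n : ℕ} (hn : a + b = n)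
    (j : ℕ) :
    ∑ k ∈ range (j + 1), (-1 : ℤ) ^ (j - k) * ((n - k).choose (j - k) : ℤ) *
        (if b ≤ k then (a.choose (k - b) : ℤ) else 0)
      = if j = b then 1 else 0 := by
  subst hn
  rcases lt_or_ge j b with hjb | hbj
  · rw [if_neg hjb.ne]
    refine sum_eq_zero fun k hk => ?_
    rw [if_neg (by simp at hk; omega), mul_zero]
  obtain ⟨r, rfl⟩ := Nat.exists_eq_add_of_le hbj
  have hbelow : ∑ k ∈ range b, (-1 : ℤ) ^ (b + r - k) * ((a + b - k).choose (b + r - k) : ℤ) *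
      (if b ≤ k then (a.choose (k - b) : ℤ) else 0) = 0 :=
    sum_eq_zero fun k hk => by rw [if_neg (by simp at hk; omega), mul_zero]
  have hshift : ∀ m ∈ range (r + 1),
      (-1 : ℤ) ^ (b + r - (b + m)) * ((a + b - (b + m)).choose (b + r - (b + m)) : ℤ) *
          (if b ≤ b + m then (a.choose (b + m - b) : ℤ) else 0)
        = (-1 : ℤ) ^ (r - m) * ((a - m).choose (r - m) : ℤ) * (a.choose m : ℤ) := by
    intro m _
    rw [if_pos (Nat.le_add_right b m), Nat.add_sub_add_left, Nat.add_sub_cancel_left,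
      Nat.add_comm a b, Nat.add_sub_add_left]
  rw [Nat.add_assoc, sum_range_add, hbelow, zero_add, sum_congr rfl hshift,
    sum_range_neg_one_pow_mul_choose_sub_mul_choose]
  simp

theorem gvec_sub_gvec {V : Type*} (d : ℕ) (X Y : Finset (Finset V)) (j : ℕ) :
    gvec d Y j - gvec d X j = ∑ k ∈ range (j + 1),
      (-1 : ℤ) ^ (j - k) * ((d + 2 - k).choose (j - k) : ℤ) * ((fc Y k : ℤ) - fc X k) := by
  rw [gvec, gvec, ← sum_sub_distrib]
  exact sum_congr rfl fun k _ => by ring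

section Faces

variable {V : Type*} [DecidableEq V]

theorem fc_union_of_disjoint {A B : Finset (Finset V)} (h : Disjoint A B) (k : ℕ) :
    fc (A ∪ B) k = fc A k + fc B k := by
  rw [fc, filter_union, card_union_of_disjoint (disjoint_filter_filter h), fc, fc]

theorem fc_sdiff_add_fc {A B : Finset (Finset V)} (h : B ⊆ A) (k : ℕ) :
    fc (A \ B) k + fc B k = fc A k := by
  rw [← fc_union_of_disjoint sdiff_disjoint, sdiff_union_of_subset h]

theorem joinC_comm (A B : Finset (Finset V)) : joinC A B = joinC B A := by
  ext S
  simp only [joinC, mem_image, mem_product, Prod.exists]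
  constructor <;> rintro ⟨F, G, ⟨hF, hG⟩, rfl⟩ <;> exact ⟨G, F, ⟨hG, hF⟩, union_comm _ _⟩

theorem joinC_simplexC_boundaryC {α β : Finset V} (h : Disjoint α β) :
    joinC (simplexC α) (boundaryC β) = (α ∪ β).powerset.filter fun S => ¬ β ⊆ S := by
  ext S
  simp only [joinC, simplexC, boundaryC, mem_image, mem_product, mem_filter, mem_powerset,
    mem_erase, Prod.exists]
  constructor
  · rintro ⟨F, G, ⟨hF, hGβ, hG⟩, rfl⟩
    refine ⟨union_subset_union hF hG, fun hβ => hGβ (hG.antisymm fun x hx => ?_)⟩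
    exact (mem_union.mp (hβ hx)).resolve_left fun hxF => disjoint_left.mp h (hF hxF) hx
  · rintro ⟨hS, hβS⟩
    refine ⟨S ∩ α, S ∩ β, ⟨inter_subset_right, fun hSβ => hβS ?_, inter_subset_right⟩, ?_⟩
    · exact hSβ ▸ inter_subset_left
    · rw [← inter_union_distrib_left, inter_eq_left.mpr hS]

theorem card_filter_superset_powersetCard {α β : Finset V} (h : Disjoint α β) (k : ℕ) :
    #{S ∈ powersetCard k (α ∪ β) | β ⊆ S}
      = if β.card ≤ k then α.card.choose (k - β.card) else 0 := by
  split_ifs with hβk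
  · rw [← card_powersetCard]
    refine card_bij' (fun S _ => S \ β) (fun T _ => T ∪ β) (fun S hS => ?_) (fun T hT => ?_)
      (fun S hS => ?_) (fun T hT => ?_)
    · simp only [mem_filter, mem_powersetCard] at hS ⊢
      obtain ⟨⟨hSαβ, hSk⟩, hβS⟩ := hS
      refine ⟨?_, by rw [card_sdiff_of_subset hβS, hSk]⟩
      exact sdiff_le_iff'.mpr hSαβ
    · simp only [mem_filter, mem_powersetCard] at hT ⊢
      refine ⟨⟨union_subset_union hT.1 Subset.rfl, ?_⟩, subset_union_right⟩
      rw [card_union_of_disjoint (h.mono_left hT.1), hT.2]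
      omega
    · exact sdiff_union_of_subset (mem_filter.mp hS).2
    · rw [union_sdiff_right, sdiff_eq_self_of_disjoint (h.mono_left (mem_powersetCard.mp hT).1)]
  · refine card_eq_zero.mpr (filter_eq_empty_iff.mpr fun S hS hβS => hβk ?_)
    exact (mem_powersetCard.mp hS).2 ▸ card_le_card hβS

theorem fc_joinC_simplexC_boundaryC_add {α β : Finset V} (h : Disjoint α β) (k : ℕ) :
    fc (joinC (simplexC α) (boundaryC β)) k
        + (if β.card ≤ k then α.card.choose (k - β.card) else 0)
      = (α.card + β.card).choose k := by
  rw [← card_filter_superset_powersetCard h, ← card_union_of_disjoint h, ← card_powersetCard,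
    joinC_simplexC_boundaryC h, fc, filter_comm, ← powersetCard_eq_filter, add_comm]
  exact card_filter_add_card_filter_not _

theorem BistellarMove.fc_sub_fc {X Y : Finset (Finset V)} {α β : Finset V}
    (hmove : BistellarMove X Y α β) (k : ℕ) :
    (fc Y k : ℤ) - fc X k
      = (if β.card ≤ k then (α.card.choose (k - β.card) : ℤ) else 0)
        - (if α.card ≤ k then (β.card.choose (k - α.card) : ℤ) else 0) := by
  obtain ⟨-, -, hαβ, hinduced, rfl⟩ := hmove
  have hremoved : joinC (simplexC α) (boundaryC β) ⊆ X :=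
    hinduced ▸ filter_subset _ _
  have hadded : joinC (boundaryC α) (simplexC β) ⊆ (α ∪ β).powerset := by
    rw [joinC_comm, joinC_simplexC_boundaryC hαβ.symm, union_comm]
    exact filter_subset _ _
  -- a new face lies in `α ∪ β`, where `X` consisted only of removed faces
  have hdisj : Disjoint (X \ joinC (simplexC α) (boundaryC β))
      (joinC (boundaryC α) (simplexC β)) := by
    refine disjoint_left.mpr fun s hs hsY => (mem_sdiff.mp hs).2 ?_
    exact hinduced ▸ mem_filter.mpr ⟨(mem_sdiff.mp hs).1, mem_powerset.mp (hadded hsY)⟩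
  have hY := fc_union_of_disjoint hdisj k
  have hX := fc_sdiff_add_fc hremoved k
  have hβ := fc_joinC_simplexC_boundaryC_add hαβ k
  have hα := fc_joinC_simplexC_boundaryC_add hαβ.symm k
  rw [← joinC_comm, add_comm β.card] at hα
  split_ifs at hβ hα ⊢ <;> omega

end Faces

theorem gvector_of_bistellarMove_general {V : Type*} [DecidableEq V]
    (X Y : Finset (Finset V)) (d l : ℕ)
    (α β : Finset V) (hl : l ≤ d) (hβ : β.card = l + 1) (hα : α.card = d + 1 - l)
    (hmove : BistellarMove X Y α β) (j : ℕ) :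
    gvec d Y (j + 1) - gvec d X (j + 1) =
      if j = l ∧ 2 * j ≠ d then 1
      else if j = d - l ∧ 2 * j ≠ d then -1
      else 0 := by
  have hcard : α.card + β.card = d + 2 := by omega
  simp only [gvec_sub_gvec, hmove.fc_sub_fc, mul_sub, sum_sub_distrib]
  rw [sum_range_neg_one_pow_mul_choose_mul_shifted_choose hcard,
    sum_range_neg_one_pow_mul_choose_mul_shifted_choose ((add_comm _ _).trans hcard), hα, hβ]
  split_ifs <;> omega

/-- Change of the `g`-vector under a bistellar move of index `l` on `d`-dimensional
complexes: `g_{j+1}(Y) − g_{j+1}(X)` is `+1` if `j = l ≠ d/2`, `−1` if `j = d−l ≠ d/2`,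
and `0` otherwise. -/
theorem gvector_of_bistellarMove {V : Type*} [DecidableEq V]
    (X Y : Finset (Finset V)) (d l : ℕ)
    (hX : IsComplex X) (hY : IsComplex Y)
    (hXd : ∀ s ∈ X, s.card ≤ d + 1) (hYd : ∀ s ∈ Y, s.card ≤ d + 1)
    (α β : Finset V) (hl : l ≤ d) (hβ : β.card = l + 1) (hα : α.card = d + 1 - l)
    (hmove : BistellarMove X Y α β) (j : ℕ) (hj : j ≤ d) :
    gvec d Y (j + 1) - gvec d X (j + 1) =
      if j = l ∧ 2 * j ≠ d then 1
      else if j = d - l ∧ 2 * j ≠ d then -1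
      else 0 :=
  gvector_of_bistellarMove_general X Y d l α β hl hβ hα hmove j
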